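/- Let (X,d) be a metric space with diam X ≤ D, and let ν be a Borel measure on X whose support is all of X and with 0 < ν(X) < ∞, satisfying the Bishop–Gromov inequality with parameters (K,N), where K ≤ 0 and 1 < N < ∞. Let 0 < ε ≤ 2D and let p₁,…,p_{n₀} be distinct points of X such that the open balls B(p_k, ε/2), k = 1,…,n₀, are pairwise disjoint. Then n₀ ≤ (∫₀^D S_K^N(t) dt) / (∫₀^{ε/2} S_K^N(t) dt). -/

import Mathlib

open MeasureTheory Metric

/-- The model volume density `S_K^N` for `K ≤ 0`, `1 < N < ∞`. -/
noncomputable def SKN (K N t : ℝ) : ℝ :=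
  if K = 0 then t ^ (N - 1)
  else Real.sinh (Real.sqrt (|K| / (N - 1)) * t) ^ (N - 1)

/-- A Borel measure `ν` of full support satisfies the Bishop–Gromov inequality with
parameters `(K, N)` if for every `x` the function
`r ↦ ν(B(x,r)) / ∫₀^r S_K^N(t) dt` is nonincreasing on `(0, ∞)`. -/
def BishopGromov {X : Type*} [MetricSpace X] [MeasurableSpace X]
    (ν : Measure X) (K N : ℝ) : Prop :=
  ∀ x : X, AntitoneOn
    (fun r => (ν (ball x r)).toReal / ∫ t in (0:ℝ)..r, SKN K N t) (Set.Ioi 0)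

/-!
Each ball `B(p_k, ε/2)` is compared with a ball of radius slightly larger than `D`, which is the
whole space: Bishop–Gromov gives `ν(X) / V(s) ≤ ν(B(p_k, ε/2)) / V(ε/2)` for every `s > D`, where
`V(r) = ∫₀^r S_K^N`, and letting `s ↓ D` yields `ν(B(p_k, ε/2)) ≥ ν(X) V(ε/2) / V(D)`. The balls are
disjoint, so summing these lower bounds gives `n₀ ν(X) V(ε/2) / V(D) ≤ ν(X)`.
-/

theorem continuous_SKN (K : ℝ) {N : ℝ} (hN : 1 < N) : Continuous (SKN K N) := by
  have hexp : 0 ≤ N - 1 := by linarith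
  unfold SKN
  split_ifs
  · exact continuous_id.rpow_const fun _ => Or.inr hexp
  · exact (Real.continuous_sinh.comp (continuous_const.mul continuous_id)).rpow_const
      fun _ => Or.inr hexp

theorem SKN_pos {K N t : ℝ} (hN : 1 < N) (ht : 0 < t) : 0 < SKN K N t := by
  unfold SKN
  split_ifs with hK0
  · exact Real.rpow_pos_of_pos ht _
  · have hc : 0 < |K| / (N - 1) := div_pos (abs_pos.2 hK0) (by linarith)
    exact Real.rpow_pos_of_pos (Real.sinh_pos_iff.2 (by positivity)) _

theorem integral_SKN_pos {K N r : ℝ} (hN : 1 < N) (hr : 0 < r) :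
    0 < ∫ t in (0:ℝ)..r, SKN K N t :=
  intervalIntegral.intervalIntegral_pos_of_pos_on
    ((continuous_SKN K hN).intervalIntegrable 0 r) (fun _ ht => SKN_pos hN ht.1) hr

theorem BishopGromov.measure_univ_div_le {X : Type*} [MetricSpace X] [MeasurableSpace X]
    {ν : Measure X} {K N D : ℝ} (hBG : BishopGromov ν K N) (hN : 1 < N)
    (hD : ∀ x y : X, dist x y ≤ D) (x : X) {r : ℝ} (hr : 0 < r) (hrD : r ≤ D) :
    (ν Set.univ).toReal / (∫ t in (0:ℝ)..D, SKN K N t) ≤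
      (ν (ball x r)).toReal / ∫ t in (0:ℝ)..r, SKN K N t := by
  have hV : Continuous fun s => ∫ t in (0:ℝ)..s, SKN K N t :=
    intervalIntegral.continuous_primitive
      (fun a b => (continuous_SKN K hN).intervalIntegrable a b) 0
  have hlim : Filter.Tendsto (fun s => (ν Set.univ).toReal / ∫ t in (0:ℝ)..s, SKN K N t)
      (nhdsWithin D (Set.Ioi D))
      (nhds ((ν Set.univ).toReal / ∫ t in (0:ℝ)..D, SKN K N t)) :=
    tendsto_const_nhds.div ((hV.tendsto D).mono_left nhdsWithin_le_nhds)
      (integral_SKN_pos hN (hr.trans_le hrD)).ne'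
  refine le_of_tendsto hlim (eventually_nhdsWithin_of_forall fun s (hs : D < s) => ?_)
  have hball : ball x s = Set.univ :=
    Set.eq_univ_of_forall fun y => mem_ball.2 ((hD y x).trans_lt hs)
  simpa only [hball] using hBG x hr (hr.trans (hrD.trans_lt hs)) (hrD.trans hs.le)

theorem stmt_0_general {X : Type*} [MetricSpace X] [MeasurableSpace X] [BorelSpace X]
    (ν : Measure X)
    (hpos : 0 < ν Set.univ) (hfin : ν Set.univ < ⊤)
    (K N D : ℝ) (hN : 1 < N)
    (hBG : BishopGromov ν K N)
    (hD : ∀ x y : X, dist x y ≤ D)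
    (ε : ℝ) (hε : 0 < ε) (hεD : ε ≤ 2 * D)
    (n₀ : ℕ) (p : Fin n₀ → X)
    (hdisj : Pairwise fun i j =>
      Disjoint (ball (p i) (ε / 2)) (ball (p j) (ε / 2))) :
    (n₀ : ℝ) ≤ (∫ t in (0:ℝ)..D, SKN K N t) / ∫ t in (0:ℝ)..(ε / 2), SKN K N t := by
  have : IsFiniteMeasure ν := ⟨hfin⟩
  set V := fun r => ∫ t in (0:ℝ)..r, SKN K N t
  have hr : 0 < ε / 2 := half_pos hε
  have hVr : 0 < V (ε / 2) := integral_SKN_pos hN hr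
  have hVD : 0 < V D := integral_SKN_pos hN (by linarith)
  have hmass : 0 < ν.real Set.univ := ENNReal.toReal_pos hpos.ne' hfin.ne
  have hball (i : Fin n₀) : ν.real Set.univ / V D * V (ε / 2) ≤ ν.real (ball (p i) (ε / 2)) :=
    (le_div_iff₀ hVr).1 (hBG.measure_univ_div_le hN hD (p i) hr (by linarith))
  have hpack : (n₀ : ℝ) * (ν.real Set.univ / V D * V (ε / 2)) ≤ ν.real Set.univ := by
    calc (n₀ : ℝ) * (ν.real Set.univ / V D * V (ε / 2))
        ≤ ∑ i, ν.real (ball (p i) (ε / 2)) := by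
          simpa using Finset.card_nsmul_le_sum Finset.univ _ _ fun i _ => hball i
      _ ≤ ν.real Set.univ := sum_measureReal_le_measureReal_univ
          (fun _ _ => measurableSet_ball) fun i _ j _ hij => hdisj hij
  rw [le_div_iff₀ hVr, ← div_le_one hVD]
  refine le_of_mul_le_mul_left ?_ hmass
  calc ν.real Set.univ * (n₀ * V (ε / 2) / V D)
      = n₀ * (ν.real Set.univ / V D * V (ε / 2)) := by ring
    _ ≤ ν.real Set.univ * 1 := by rwa [mul_one]

theorem stmt_0 {X : Type*} [MetricSpace X] [MeasurableSpace X] [BorelSpace X]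
    (ν : Measure X)
    (hfull : ∀ x : X, ∀ r > (0:ℝ), 0 < ν (ball x r))
    (hpos : 0 < ν Set.univ) (hfin : ν Set.univ < ⊤)
    (K N D : ℝ) (hK : K ≤ 0) (hN : 1 < N)
    (hBG : BishopGromov ν K N)
    (hD : ∀ x y : X, dist x y ≤ D)
    (ε : ℝ) (hε : 0 < ε) (hεD : ε ≤ 2 * D)
    (n₀ : ℕ) (p : Fin n₀ → X) (hinj : Function.Injective p)
    (hdisj : Pairwise fun i j =>
      Disjoint (ball (p i) (ε / 2)) (ball (p j) (ε / 2))) :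
    (n₀ : ℝ) ≤ (∫ t in (0:ℝ)..D, SKN K N t) / ∫ t in (0:ℝ)..(ε / 2), SKN K N t :=
  stmt_0_general ν hpos hfin K N D hN hBG hD ε hε hεD n₀ p hdisj
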